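/- For every integer n ≥ 1, the rank generating function of the order ideals of T_n({b,g}) equals the product of the first n Carlitz–Riordan q-Catalan polynomials: F(J(T_n({b,g})),q) = ∏_{j=1}^{n} C_j(q), as polynomials in ℤ[q]. -/
import Mathlib


open scoped Classical

noncomputable section

/-- `V3 n` is the set `{(a,b,c) ∈ ℤ≥0³ : a + b + c ≤ n - 2}`. -/
def V3 (n : ℕ) : Finset (ℤ × ℤ × ℤ) :=
  ((Finset.Icc (0:ℤ) (n:ℤ) ×ˢ Finset.Icc (0:ℤ) (n:ℤ) ×ˢ Finset.Icc (0:ℤ) (n:ℤ)).filter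
    (fun p => p.1 + p.2.1 + p.2.2 ≤ (n:ℤ) - 2))

/-- The six edge vectors. -/
def vr : ℤ × ℤ × ℤ := (1,0,0)
def vg : ℤ × ℤ × ℤ := (0,1,0)
def vy : ℤ × ℤ × ℤ := (0,0,1)
def vb : ℤ × ℤ × ℤ := (-1,1,0)
def vo : ℤ × ℤ × ℤ := (-1,0,1)
def vs : ℤ × ℤ × ℤ := (0,1,-1)

/-- One step: add a vector of `S`, staying inside `W`. -/
def step3 (S : Set (ℤ × ℤ × ℤ)) (W : Finset (ℤ × ℤ × ℤ)) (u v : ℤ × ℤ × ℤ) : Prop :=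
  u ∈ W ∧ v ∈ W ∧ ∃ e ∈ S, v = u + e

/-- The order relation of `T_n(S)`: reflexive-transitive closure of `step3`,
restricted to `W`. -/
def le3 (S : Set (ℤ × ℤ × ℤ)) (W : Finset (ℤ × ℤ × ℤ)) (u v : ℤ × ℤ × ℤ) : Prop :=
  u ∈ W ∧ v ∈ W ∧ Relation.ReflTransGen (step3 S W) u v

/-- An order ideal: a downward closed subset of `W`. -/
def IsIdeal3 (S : Set (ℤ × ℤ × ℤ)) (W : Finset (ℤ × ℤ × ℤ))
    (I : Finset (ℤ × ℤ × ℤ)) : Prop :=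
  I ⊆ W ∧ ∀ u v : ℤ × ℤ × ℤ, le3 S W u v → v ∈ I → u ∈ I

/-- The set of all order ideals of `T_n(S)`. -/
def ideals3 (S : Set (ℤ × ℤ × ℤ)) (W : Finset (ℤ × ℤ × ℤ)) :
    Finset (Finset (ℤ × ℤ × ℤ)) :=
  W.powerset.filter (fun I => IsIdeal3 S W I)

/-- The rank generating function `F(J(T_n(S)),q) = Σ_{I} q^{|I|}`. -/
def genF3 (S : Set (ℤ × ℤ × ℤ)) (W : Finset (ℤ × ℤ × ℤ)) : Polynomial ℤ :=
  ∑ I ∈ ideals3 S W, Polynomial.X ^ I.card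

/-- The Carlitz–Riordan q-Catalan polynomials: `C 0 = 1` and, for `j ≥ 1`,
`C j = Σ_{k=1}^{j} q^{k-1} C (k-1) C (j-k)` (written below with `k` shifted by one). -/
def qCat : ℕ → Polynomial ℤ
  | 0 => 1
  | n + 1 => ∑ k ∈ (Finset.range (n+1)).attach,
      Polynomial.X ^ (k : ℕ) * qCat k * qCat (n - (k : ℕ))
  decreasing_by
  · exact Finset.mem_range.mp k.2
  · exact Nat.lt_succ_of_le (Nat.sub_le n k)

end

noncomputable section


lemma downclosed_nat (T : Finset ℕ) (h : ∀ k, k + 1 ∈ T → k ∈ T) (k : ℕ) :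
    k ∈ T ↔ k < T.card := by
  have mono : ∀ k, k ∈ T → ∀ j, j ≤ k → j ∈ T := by
    intro k
    induction k with
    | zero => intro hk j hj; simpa [Nat.le_zero.mp hj] using hk
    | succ k ih =>
      intro hk j hj
      rcases Nat.eq_or_lt_of_le hj with rfl | hlt
      · exact hk
      · exact ih (h k hk) j (by omega)
  constructor
  · intro hk
    have hsub : Finset.range (k+1) ⊆ T := by
      intro j hj
      exact mono k hk j (by simpa using Nat.lt_succ_iff.mp (Finset.mem_range.mp hj))
    have := Finset.card_le_card hsub
    simpa using this
  · intro hk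
    by_contra hkT
    have hsub : T ⊆ Finset.range k := by
      intro j hj
      rw [Finset.mem_range]
      by_contra hjk
      push_neg at hjk
      exact hkT (mono j hj k hjk)
    have := Finset.card_le_card hsub
    simp at this
    omega

lemma downclosed_int (S : Finset ℤ) (h0 : ∀ y ∈ S, 0 ≤ y)
    (h : ∀ y ∈ S, 1 ≤ y → y - 1 ∈ S) (y : ℤ) :
    y ∈ S ↔ 0 ≤ y ∧ y < S.card := by
  set T := S.image Int.toNat with hTdef
  have hT : ∀ k : ℕ, k ∈ T ↔ (k : ℤ) ∈ S := by
    intro k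
    simp only [hTdef, Finset.mem_image]
    constructor
    · rintro ⟨a, ha, rfl⟩
      rwa [Int.toNat_of_nonneg (h0 a ha)]
    · intro hk
      exact ⟨k, hk, Int.toNat_natCast k⟩
  have hcard : T.card = S.card :=
    Finset.card_image_of_injOn (fun a ha b hb hab => by
      have := h0 a ha; have := h0 b hb; omega)
  have hdc : ∀ k, k + 1 ∈ T → k ∈ T := by
    intro k hk
    rw [hT] at hk ⊢
    have := h _ (by exact_mod_cast hk) (by exact_mod_cast le_add_self)
    convert this using 1
    push_cast
    ring
  constructor
  · intro hy
    have hy0 := h0 y hy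
    have : y.toNat ∈ T := (hT _).mpr (by rwa [Int.toNat_of_nonneg hy0])
    have := (downclosed_nat T hdc _).mp this
    constructor
    · exact hy0
    · rw [← hcard]; omega
  · rintro ⟨hy0, hyc⟩
    have : y.toNat < T.card := by rw [hcard]; omega
    have := (downclosed_nat T hdc _).mpr this
    rw [hT] at this
    rwa [Int.toNat_of_nonneg hy0] at this

def reg (b len : ℕ) : Finset (ℤ × ℤ) :=
  (Finset.Icc (0:ℤ) (len:ℤ) ×ˢ Finset.Icc (0:ℤ) ((b:ℤ)+(len:ℤ))).filter
    (fun p => p.1 < (len:ℤ) ∧ p.2 < (b:ℤ) + p.1)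

lemma mem_reg {b len : ℕ} {p : ℤ × ℤ} :
    p ∈ reg b len ↔ 0 ≤ p.1 ∧ p.1 < (len:ℤ) ∧ 0 ≤ p.2 ∧ p.2 < (b:ℤ) + p.1 := by
  simp only [reg, Finset.mem_filter, Finset.mem_product, Finset.mem_Icc]
  omega

def rIdl (b len : ℕ) : Finset (Finset (ℤ × ℤ)) :=
  (reg b len).powerset.filter
    (fun T => ∀ p ∈ T, 1 ≤ p.2 →
      ((p.1, p.2 - 1) ∈ T ∧ (1 ≤ p.1 → (p.1 - 1, p.2 - 1) ∈ T)))

lemma mem_rIdl {b len : ℕ} {T : Finset (ℤ × ℤ)} :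
    T ∈ rIdl b len ↔ T ⊆ reg b len ∧ ∀ p ∈ T, 1 ≤ p.2 →
      ((p.1, p.2 - 1) ∈ T ∧ (1 ≤ p.1 → (p.1 - 1, p.2 - 1) ∈ T)) := by
  simp [rIdl, Finset.mem_filter, Finset.mem_powerset]

def rPoly (b len : ℕ) : Polynomial ℤ := ∑ T ∈ rIdl b len, Polynomial.X ^ T.card

def colC (h : ℕ) : Finset (ℤ × ℤ) :=
  (Finset.Ico (0:ℤ) (h:ℤ)).image (fun y => ((0:ℤ), y))

lemma mem_colC {h : ℕ} {q : ℤ × ℤ} :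
    q ∈ colC h ↔ q.1 = 0 ∧ 0 ≤ q.2 ∧ q.2 < (h:ℤ) := by
  simp only [colC, Finset.mem_image, Finset.mem_Ico]
  constructor
  · rintro ⟨y, hy, rfl⟩; exact ⟨rfl, hy.1, hy.2⟩
  · rintro ⟨h1, h2, h3⟩
    exact ⟨q.2, ⟨h2, h3⟩, by rw [← h1]⟩

lemma card_colC (h : ℕ) : (colC h).card = h := by
  rw [colC, Finset.card_image_of_injective _ (fun a b hab => by simpa using hab)]
  simp

lemma mem_image_shift (T' : Finset (ℤ × ℤ)) (q : ℤ × ℤ) :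
    q ∈ T'.image (fun p => (p.1 + 1, p.2)) ↔ (q.1 - 1, q.2) ∈ T' := by
  simp only [Finset.mem_image]
  constructor
  · rintro ⟨p, hp, rfl⟩; simpa using hp
  · intro hq; exact ⟨(q.1 - 1, q.2), hq, by simp⟩

lemma mem_image_unshift (T : Finset (ℤ × ℤ)) (q : ℤ × ℤ) :
    q ∈ (T.filter (fun p => 1 ≤ p.1)).image (fun p => (p.1 - 1, p.2))
      ↔ (q.1 + 1, q.2) ∈ T ∧ 0 ≤ q.1 := by
  simp only [Finset.mem_image, Finset.mem_filter]
  constructor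
  · rintro ⟨p, ⟨hp, hp1⟩, rfl⟩
    constructor
    · simpa using hp
    · simpa using hp1
  · rintro ⟨hq, hq1⟩
    exact ⟨(q.1 + 1, q.2), ⟨hq, by omega⟩, by simp⟩

-- column interval property
lemma col_mem {b len : ℕ} {T : Finset (ℤ × ℤ)} (hT : T ∈ rIdl b len) (y : ℤ) :
    ((0:ℤ), y) ∈ T ↔ 0 ≤ y ∧ y < ((T.filter (fun p => p.1 = (0:ℤ))).card : ℤ) := by
  obtain ⟨hsub, hcl⟩ := mem_rIdl.mp hT
  set S := (T.filter (fun p => p.1 = (0:ℤ))).image Prod.snd with hS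
  have hmem : ∀ z : ℤ, z ∈ S ↔ ((0:ℤ), z) ∈ T := by
    intro z
    simp only [hS, Finset.mem_image, Finset.mem_filter]
    constructor
    · rintro ⟨p, ⟨hp, hp0⟩, rfl⟩
      have : p = (0, p.2) := Prod.ext hp0 rfl
      rwa [← this]
    · intro hz; exact ⟨(0, z), ⟨hz, rfl⟩, rfl⟩
  have hcard : S.card = (T.filter (fun p => p.1 = (0:ℤ))).card := by
    apply Finset.card_image_of_injOn
    intro p hp q hq hpq
    simp only [Finset.mem_coe, Finset.mem_filter] at hp hq
    exact Prod.ext (hp.2.trans hq.2.symm) hpq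
  rw [← hmem, ← hcard]
  apply downclosed_int
  · intro z hz
    have := hsub ((hmem z).mp hz)
    exact (mem_reg.mp this).2.2.1
  · intro z hz hz1
    rw [hmem] at hz ⊢
    exact (hcl _ hz (by simpa using hz1)).1

-- cap lemma
lemma cap_lemma {b len : ℕ} {T : Finset (ℤ × ℤ)} (hT : T ∈ rIdl b len) :
    ∀ p ∈ T, p.2 < ((T.filter (fun p => p.1 = (0:ℤ))).card : ℤ) + p.1 := by
  obtain ⟨hsub, hcl⟩ := mem_rIdl.mp hT
  set hc := ((T.filter (fun p => p.1 = (0:ℤ))).card : ℤ) with hhc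
  have key : ∀ n : ℕ, ∀ p ∈ T, p.2 = (n:ℤ) → p.2 < hc + p.1 := by
    intro n
    induction n with
    | zero =>
      intro p hp hp2
      have h1 := mem_reg.mp (hsub hp)
      rcases eq_or_lt_of_le h1.1 with heq | hlt
      · have hp0 : p = ((0:ℤ), p.2) := Prod.ext heq.symm rfl
        have := (col_mem hT p.2).mp (by rwa [← hp0])
        omega
      · have : (0:ℤ) ≤ hc := by positivity
        omega
    | succ n ih =>
      intro p hp hp2
      have h1 := mem_reg.mp (hsub hp)
      rcases eq_or_lt_of_le h1.1 with heq | hlt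
      · have hp0 : p = ((0:ℤ), p.2) := Prod.ext heq.symm rfl
        have := (col_mem hT p.2).mp (by rwa [← hp0])
        omega
      · have hd := (hcl p hp (by omega)).2 (by omega)
        have := ih _ hd (by simp; omega)
        simp at this
        omega
  intro p hp
  have h1 := mem_reg.mp (hsub hp)
  exact key p.2.toNat p hp (by omega)

noncomputable def Acat : ℕ → ℕ → Polynomial ℤ
  | _, 0 => 1
  | b, (len+1) => ∑ h ∈ Finset.range (b+1), Polynomial.X ^ h * Acat (h+1) len
termination_by b len => len

lemma Acat_zero (b : ℕ) : Acat b 0 = 1 := by rw [Acat]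

lemma Acat_succ (b len : ℕ) :
    Acat b (len+1) = ∑ h ∈ Finset.range (b+1), Polynomial.X ^ h * Acat (h+1) len := by
  rw [Acat]

lemma Acat_shift (b m : ℕ) :
    ∑ h ∈ Finset.range (b+2), Polynomial.X ^ h * Acat h m
      = Acat 0 m + Polynomial.X * Acat b (m+1) := by
  rw [Finset.sum_range_succ' (fun h => Polynomial.X ^ h * Acat h m) (b+1), Acat_succ,
    Finset.mul_sum]
  simp only [pow_succ, pow_zero, one_mul]
  rw [add_comm]
  congr 1
  apply Finset.sum_congr rfl
  intro i _
  ring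

lemma Acat_phi (len b : ℕ) :
    Acat (b+1) len = Polynomial.X ^ len * Acat b len
      + ∑ r ∈ Finset.range len, Polynomial.X ^ r * Acat b r * Acat 1 (len - 1 - r) := by
  induction len generalizing b with
  | zero => simp [Acat_zero]
  | succ len ih =>
    have expand : ∀ h ∈ Finset.range (b+2), Polynomial.X ^ h * Acat (h+1) len
        = Polynomial.X ^ len * (Polynomial.X ^ h * Acat h len)
          + ∑ r ∈ Finset.range len,
              (Polynomial.X ^ h * Acat h r) * (Polynomial.X ^ r * Acat 1 (len - 1 - r)) := by
      intro h _
      rw [ih h, mul_add, Finset.mul_sum]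
      congr 1
      · ring
      · exact Finset.sum_congr rfl (fun r _ => by ring)
    calc Acat (b+1) (len+1)
        = ∑ h ∈ Finset.range (b+2), Polynomial.X ^ h * Acat (h+1) len := Acat_succ _ _
      _ = (∑ h ∈ Finset.range (b+2), Polynomial.X ^ len * (Polynomial.X ^ h * Acat h len))
          + ∑ h ∈ Finset.range (b+2), ∑ r ∈ Finset.range len,
              (Polynomial.X ^ h * Acat h r) * (Polynomial.X ^ r * Acat 1 (len - 1 - r)) := by
          rw [Finset.sum_congr rfl expand, Finset.sum_add_distrib]
      _ = Polynomial.X ^ len * (Acat 0 len + Polynomial.X * Acat b (len+1))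
          + ∑ r ∈ Finset.range len,
              (Acat 0 r + Polynomial.X * Acat b (r+1)) * (Polynomial.X ^ r * Acat 1 (len - 1 - r)) := by
          rw [← Finset.mul_sum, Acat_shift, Finset.sum_comm]
          congr 1
          exact Finset.sum_congr rfl (fun r _ => by rw [← Finset.sum_mul, Acat_shift])
      _ = Polynomial.X ^ (len+1) * Acat b (len+1)
          + ((Polynomial.X ^ len * Acat 0 len
              + ∑ r ∈ Finset.range len, Polynomial.X ^ r * Acat 0 r * Acat 1 (len - 1 - r))
            + ∑ r ∈ Finset.range len,
                Polynomial.X ^ (r+1) * Acat b (r+1) * Acat 1 (len - 1 - r)) := by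
          rw [Finset.sum_congr rfl (fun (r : ℕ) _ => show
            (Acat 0 r + Polynomial.X * Acat b (r+1)) * (Polynomial.X ^ r * Acat 1 (len - 1 - r))
            = Polynomial.X ^ r * Acat 0 r * Acat 1 (len - 1 - r)
              + Polynomial.X ^ (r+1) * Acat b (r+1) * Acat 1 (len - 1 - r) by ring),
            Finset.sum_add_distrib]
          ring
      _ = Polynomial.X ^ (len+1) * Acat b (len+1)
          + ∑ r ∈ Finset.range (len+1), Polynomial.X ^ r * Acat b r * Acat 1 (len + 1 - 1 - r) := by
          congr 1
          rw [← ih 0]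
          rw [Finset.sum_range_succ' (fun r => Polynomial.X ^ r * Acat b r * Acat 1 (len + 1 - 1 - r)) len]
          simp only [Nat.add_sub_cancel, pow_zero, one_mul, Acat_zero, mul_one]
          rw [add_comm]
          congr 1
          apply Finset.sum_congr rfl
          intro r hr
          congr 2
          omega

lemma qCat_succ (n : ℕ) : qCat (n+1)
    = ∑ k ∈ Finset.range (n+1), Polynomial.X ^ k * qCat k * qCat (n - k) := by
  rw [qCat, ← Finset.sum_attach (Finset.range (n+1))
    (fun k => Polynomial.X ^ k * qCat k * qCat (n - k))]


lemma Acat_zero_succ (m : ℕ) : Acat 0 (m+1) = Acat 1 m := by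
  rw [Acat_succ]; simp

lemma Acat_eq_qCat (j : ℕ) : Acat 0 j = qCat j := by
  induction j using Nat.strong_induction_on with
  | _ j ih =>
    match j with
    | 0 => rw [Acat_zero, qCat]
    | (j+1) =>
      rw [Acat_zero_succ, qCat_succ, Acat_phi, Finset.sum_range_succ]
      have h1 : ∀ r ∈ Finset.range j,
          Polynomial.X ^ r * Acat 0 r * Acat 1 (j - 1 - r)
          = Polynomial.X ^ r * qCat r * qCat (j - r) := by
        intro r hr
        rw [Finset.mem_range] at hr
        rw [ih r (by omega), ← Acat_zero_succ, show j - 1 - r + 1 = j - r by omega,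
          ih (j - r) (by omega)]
      rw [Finset.sum_congr rfl h1, ih j (by omega)]
      rw [Nat.sub_self, show qCat 0 = 1 from by rw [qCat], mul_one, add_comm]


lemma qCat_zero' : qCat 0 = 1 := by rw [qCat]

lemma qCat_one : qCat 1 = 1 := by
  rw [qCat_succ]
  simp [qCat_zero']

lemma fiber_sum (b len h : ℕ) (hh : h ≤ b) :
    ∑ T ∈ (rIdl b (len+1)).filter
        (fun T => (T.filter (fun p => p.1 = (0:ℤ))).card = h),
      (Polynomial.X : Polynomial ℤ) ^ T.card
    = Polynomial.X ^ h * rPoly (h+1) len := by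
  rw [rPoly, Finset.mul_sum]
  apply Finset.sum_nbij'
    (i := fun T => (T.filter (fun p => 1 ≤ p.1)).image (fun p => (p.1 - 1, p.2)))
    (j := fun T' => colC h ∪ T'.image (fun p => (p.1 + 1, p.2)))
  · -- hi : maps into rIdl (h+1) len
    intro T hT
    rw [Finset.mem_filter] at hT
    obtain ⟨hTI, hTh⟩ := hT
    obtain ⟨hsub, hcl⟩ := mem_rIdl.mp hTI
    have hcap := cap_lemma hTI
    rw [mem_rIdl]
    constructor
    · intro q hq
      rw [mem_image_unshift] at hq
      obtain ⟨hq1, hq0⟩ := hq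
      have hr := mem_reg.mp (hsub hq1)
      have hc := hcap _ hq1
      rw [hTh] at hc
      rw [mem_reg]
      simp only at hr hc ⊢
      push_cast
      push_cast at hr hc
      refine ⟨hq0, by omega, by omega, by omega⟩
    · intro q hq hq2
      rw [mem_image_unshift] at hq
      obtain ⟨hq1, hq0⟩ := hq
      have hv := (hcl _ hq1 (by simpa using hq2)).1
      have hd := (hcl _ hq1 (by simpa using hq2)).2
      constructor
      · rw [mem_image_unshift]
        exact ⟨hv, hq0⟩
      · intro hq11
        rw [mem_image_unshift]
        have := hd (by simp; omega)
        simp only at this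
        constructor
        · convert this using 2 <;> omega
        · omega
  · -- hj : maps into fiber
    intro T' hT'
    obtain ⟨hsub', hcl'⟩ := mem_rIdl.mp hT'
    rw [Finset.mem_filter]
    have hcolonly : ∀ q : ℤ × ℤ, q ∈ colC h ∪ T'.image (fun p => (p.1 + 1, p.2)) →
        q.1 = 0 → q ∈ colC h := by
      intro q hq hq0
      rcases Finset.mem_union.mp hq with hc | hi
      · exact hc
      · rw [mem_image_shift] at hi
        have := mem_reg.mp (hsub' hi)
        simp only at this
        omega
    constructor
    · rw [mem_rIdl]
      constructor
      · intro q hq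
        rcases Finset.mem_union.mp hq with hc | hi
        · rw [mem_colC] at hc
          rw [mem_reg]
          have hhb : (h:ℤ) ≤ (b:ℤ) := by exact_mod_cast hh
          push_cast
          omega
        · rw [mem_image_shift] at hi
          have := mem_reg.mp (hsub' hi)
          rw [mem_reg]
          have hhb : (h:ℤ) ≤ (b:ℤ) := by exact_mod_cast hh
          simp only at this ⊢
          push_cast at this ⊢
          omega
      · intro q hq hq2
        rcases Finset.mem_union.mp hq with hc | hi
        · rw [mem_colC] at hc
          constructor
          · apply Finset.mem_union_left
            rw [mem_colC]
            simp only
            omega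
          · intro h1; omega
        · rw [mem_image_shift] at hi
          have hreg := mem_reg.mp (hsub' hi)
          have hv := (hcl' _ hi (by simpa using hq2)).1
          constructor
          · apply Finset.mem_union_right
            rw [mem_image_shift]
            simpa using hv
          · intro hq11
            rcases (show (1:ℤ) ≤ q.1 - 1 ∨ q.1 - 1 = 0 by omega) with h2 | h2
            · apply Finset.mem_union_right
              rw [mem_image_shift]
              have := (hcl' _ hi (by simpa using hq2)).2 (by simpa using h2)
              simpa using this
            · apply Finset.mem_union_left
              rw [mem_colC]
              simp only at hreg ⊢
              push_cast at hreg
              omega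
    · -- fiber value = h
      have : (colC h ∪ T'.image (fun p => (p.1 + 1, p.2))).filter
          (fun p => p.1 = (0:ℤ)) = colC h := by
        ext q
        rw [Finset.mem_filter]
        constructor
        · rintro ⟨hq, hq0⟩
          exact hcolonly q hq hq0
        · intro hq
          exact ⟨Finset.mem_union_left _ hq, (mem_colC.mp hq).1⟩
      rw [this, card_colC]
  · -- left inverse
    intro T hT
    rw [Finset.mem_filter] at hT
    obtain ⟨hTI, hTh⟩ := hT
    obtain ⟨hsub, hcl⟩ := mem_rIdl.mp hTI
    ext q
    rw [Finset.mem_union, mem_colC, mem_image_shift, mem_image_unshift]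
    simp only [sub_add_cancel]
    constructor
    · rintro (⟨h0, h1, h2⟩ | ⟨h1, h2⟩)
      · have := (col_mem hTI q.2).mpr ⟨h1, by rw [hTh]; exact h2⟩
        rwa [show ((0:ℤ), q.2) = q from Prod.ext h0.symm rfl] at this
      · simpa using h1
    · intro hq
      have hreg := mem_reg.mp (hsub hq)
      rcases (show q.1 = 0 ∨ 1 ≤ q.1 by omega) with h0 | h0
      · left
        have := (col_mem hTI q.2).mp
          (by rwa [show ((0:ℤ), q.2) = q from Prod.ext h0.symm rfl])
        rw [hTh] at this
        exact ⟨h0, this.1, this.2⟩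
      · right
        constructor
        · simpa using hq
        · omega
  · -- right inverse
    intro T' hT'
    obtain ⟨hsub', hcl'⟩ := mem_rIdl.mp hT'
    ext q
    rw [mem_image_unshift, Finset.mem_union, mem_colC, mem_image_shift]
    simp only [show (q.1 + 1 - 1 : ℤ) = q.1 from by ring]
    constructor
    · rintro ⟨(⟨h0, _, _⟩ | h1), h2⟩
      · omega
      · rwa [show ((q.1:ℤ), q.2) = q from Prod.ext rfl rfl] at h1
    · intro hq
      have hreg := mem_reg.mp (hsub' hq)
      exact ⟨Or.inr (by rwa [show ((q.1:ℤ), q.2) = q from Prod.ext rfl rfl]), hreg.1⟩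
  · -- weight
    intro T hT
    rw [Finset.mem_filter] at hT
    obtain ⟨hTI, hTh⟩ := hT
    obtain ⟨hsub, _⟩ := mem_rIdl.mp hTI
    have hinj : Function.Injective (fun p : ℤ × ℤ => (p.1 - 1, p.2)) := by
      intro a b hab
      simp only [Prod.mk.injEq] at hab
      exact Prod.ext (by omega) hab.2
    have hcardi : ((T.filter (fun p => 1 ≤ p.1)).image (fun p => (p.1 - 1, p.2))).card
        = (T.filter (fun p => 1 ≤ p.1)).card :=
      Finset.card_image_of_injective _ hinj
    have hsplit : (T.filter (fun p => p.1 = (0:ℤ))).card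
        + (T.filter (fun p => ¬ p.1 = (0:ℤ))).card = T.card :=
      Finset.card_filter_add_card_filter_not _
    have hfc : T.filter (fun p => ¬ p.1 = (0:ℤ)) = T.filter (fun p => 1 ≤ p.1) := by
      apply Finset.filter_congr
      intro p hp
      have := mem_reg.mp (hsub hp)
      constructor
      · intro hne; omega
      · intro hge; omega
    rw [← pow_add]
    congr 1
    rw [hcardi, ← hTh, ← hsplit, hfc]

theorem rPoly_eq : ∀ len b, rPoly b len = Acat b len := by
  intro len
  induction len with
  | zero =>
    intro b
    have hreg : reg b 0 = ∅ := by
      ext p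
      simp only [Finset.notMem_empty, iff_false, mem_reg]
      push_cast
      omega
    have : rIdl b 0 = {∅} := by
      ext T
      rw [mem_rIdl, hreg, Finset.mem_singleton]
      constructor
      · rintro ⟨hsub, _⟩
        exact Finset.subset_empty.mp hsub
      · rintro rfl
        exact ⟨Finset.Subset.refl _, by simp⟩
    rw [rPoly, this, Acat_zero]
    simp
  | succ len ih =>
    intro b
    rw [Acat_succ, rPoly]
    rw [← Finset.sum_fiberwise_of_maps_to
      (g := fun T => (T.filter (fun p => p.1 = (0:ℤ))).card)
      (t := Finset.range (b+1))
      (fun T hT => by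
        rw [Finset.mem_range]
        have hsub := (mem_rIdl.mp hT).1
        have : T.filter (fun p => p.1 = (0:ℤ)) ⊆ colC b := by
          intro q hq
          rw [Finset.mem_filter] at hq
          have := mem_reg.mp (hsub hq.1)
          rw [mem_colC]
          exact ⟨hq.2, this.2.2.1, by omega⟩
        have hcc := Finset.card_le_card this
        rw [card_colC] at hcc
        simpa using Nat.lt_succ_of_le hcc)]
    apply Finset.sum_congr rfl
    intro h hrange
    rw [fiber_sum b len h (by simpa using Nat.lt_succ_iff.mp (Finset.mem_range.mp hrange)),
      ih (h+1)]

lemma mem_V3 {n : ℕ} {p : ℤ × ℤ × ℤ} :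
    p ∈ V3 n ↔ 0 ≤ p.1 ∧ 0 ≤ p.2.1 ∧ 0 ≤ p.2.2 ∧ p.1 + p.2.1 + p.2.2 ≤ (n:ℤ) - 2 := by
  simp only [V3, Finset.mem_filter, Finset.mem_product, Finset.mem_Icc]
  omega

lemma mem_ideals3_iff {n : ℕ} {I : Finset (ℤ × ℤ × ℤ)} :
    I ∈ ideals3 {vb, vg} (V3 n) ↔ I ⊆ V3 n ∧ ∀ p ∈ I, 1 ≤ p.2.1 →
      ((p.1 + 1, p.2.1 - 1, p.2.2) ∈ I ∧ (p.1, p.2.1 - 1, p.2.2) ∈ I) := by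
  rw [ideals3, Finset.mem_filter, Finset.mem_powerset]
  constructor
  · rintro ⟨hsub, -, hideal⟩
    refine ⟨hsub, fun p hp hp1 => ?_⟩
    have hpW : p ∈ V3 n := hsub hp
    have hpV := mem_V3.mp hpW
    constructor
    · -- u = p - vb
      have huW : (p.1 + 1, p.2.1 - 1, p.2.2) ∈ V3 n := by
        rw [mem_V3]; simp only; omega
      have heq : p = (p.1 + 1, p.2.1 - 1, p.2.2) + vb := by
        simp [vb, Prod.ext_iff]
      exact hideal _ p ⟨huW, hpW, Relation.ReflTransGen.single
        ⟨huW, hpW, vb, Or.inl rfl, heq⟩⟩ hp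
    · have huW : (p.1, p.2.1 - 1, p.2.2) ∈ V3 n := by
        rw [mem_V3]; simp only; omega
      have heq : p = (p.1, p.2.1 - 1, p.2.2) + vg := by
        simp [vg, Prod.ext_iff]
      exact hideal _ p ⟨huW, hpW, Relation.ReflTransGen.single
        ⟨huW, hpW, vg, Or.inr rfl, heq⟩⟩ hp
  · rintro ⟨hsub, hcl⟩
    refine ⟨hsub, hsub, fun u v hle hv => ?_⟩
    obtain ⟨huW, hvW, hrtg⟩ := hle
    clear huW hvW
    induction hrtg using Relation.ReflTransGen.head_induction_on with
    | refl => exact hv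
    | head hstep _ ih =>
      rename_i a c _
      obtain ⟨haW, hcW, e, he, hce⟩ := hstep
      have haV := mem_V3.mp haW
      rcases he with rfl | rfl
      · have h1 : 1 ≤ c.2.1 := by
          rw [hce]; simp [vb]; omega
        have := (hcl c ih h1).1
        have hac : a = (c.1 + 1, c.2.1 - 1, c.2.2) := by
          rw [hce]; simp [vb, Prod.ext_iff]
        rwa [← hac] at this
      · have h1 : 1 ≤ c.2.1 := by
          rw [hce]; simp [vg]; omega
        have := (hcl c ih h1).2
        have hac : a = (c.1, c.2.1 - 1, c.2.2) := by
          rw [hce]; simp [vg, Prod.ext_iff]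
        rwa [← hac] at this

lemma slice_mem {I : Finset (ℤ × ℤ × ℤ)} {c : ℕ} {q : ℤ × ℤ} :
    q ∈ (I.filter (fun p => p.2.2 = (c:ℤ))).image (fun p => (p.1 + p.2.1, p.2.1))
      ↔ (q.1 - q.2, q.2, (c:ℤ)) ∈ I := by
  simp only [Finset.mem_image, Finset.mem_filter]
  constructor
  · rintro ⟨p, ⟨hp, hpc⟩, rfl⟩
    simp only
    have : (p.1 + p.2.1 - p.2.1, p.2.1, (c:ℤ)) = p := by
      rw [Prod.ext_iff, Prod.ext_iff]
      refine ⟨by ring, rfl, hpc.symm⟩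
    rwa [this]
  · intro hq
    refine ⟨(q.1 - q.2, q.2, (c:ℤ)), ⟨hq, rfl⟩, ?_⟩
    simp only
    rw [Prod.ext_iff]
    exact ⟨by ring, rfl⟩

lemma union_mem {n : ℕ} (f : ∀ c ∈ Finset.range (n-1), Finset (ℤ × ℤ)) (p : ℤ × ℤ × ℤ) :
    (p ∈ (Finset.range (n-1)).attach.biUnion
      (fun c => (f c.1 c.2).image (fun q => (q.1 - q.2, q.2, ((c.1:ℕ):ℤ))))) ↔
    ∃ (c : ℕ) (hc : c ∈ Finset.range (n-1)),
      p.2.2 = (c:ℤ) ∧ (p.1 + p.2.1, p.2.1) ∈ f c hc := by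
  rw [Finset.mem_biUnion]
  constructor
  · rintro ⟨c, -, hp⟩
    rw [Finset.mem_image] at hp
    obtain ⟨q, hq, hqp⟩ := hp
    refine ⟨c.1, c.2, ?_, ?_⟩
    · rw [← hqp]
    · have h1 : p.1 = q.1 - q.2 := by rw [← hqp]
      have h2 : p.2.1 = q.2 := by rw [← hqp]
      have h3 : (p.1 + p.2.1, p.2.1) = q := by
        rw [Prod.ext_iff]
        exact ⟨by rw [h1, h2]; ring, h2⟩
      rwa [h3]
  · rintro ⟨c, hc, hpc, hq⟩
    refine ⟨⟨c, hc⟩, Finset.mem_attach _ _, ?_⟩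
    rw [Finset.mem_image]
    refine ⟨(p.1 + p.2.1, p.2.1), hq, ?_⟩
    rw [Prod.ext_iff, Prod.ext_iff]
    exact ⟨by ring, rfl, hpc.symm⟩

lemma genF3_eq_prod (n : ℕ) :
    genF3 {vb, vg} (V3 n) = ∏ c ∈ Finset.range (n-1), rPoly 1 (n-1-c) := by
  rw [genF3]
  simp only [rPoly]
  rw [Finset.prod_sum]
  apply Finset.sum_nbij'
    (i := fun I => fun c _ =>
      (I.filter (fun p => p.2.2 = ((c:ℕ):ℤ))).image (fun p => (p.1 + p.2.1, p.2.1)))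
    (j := fun f => (Finset.range (n-1)).attach.biUnion
      (fun c => (f c.1 c.2).image (fun q => (q.1 - q.2, q.2, ((c.1:ℕ):ℤ)))))
  · -- hi
    intro I hI
    obtain ⟨hsub, hcl⟩ := mem_ideals3_iff.mp hI
    rw [Finset.mem_pi]
    intro c hc
    have hcn : c < n - 1 := Finset.mem_range.mp hc
    rw [mem_rIdl]
    constructor
    · intro q hq
      rw [slice_mem] at hq
      have hv := mem_V3.mp (hsub hq)
      simp only at hv
      rw [mem_reg]
      push_cast
      omega
    · intro q hq hq2
      rw [slice_mem] at hq
      have hcc := hcl _ hq (by simpa using hq2)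
      simp only at hcc
      constructor
      · rw [slice_mem]
        have e : (q.1 - (q.2 - 1), q.2 - 1, ((c:ℕ):ℤ)) = (q.1 - q.2 + 1, q.2 - 1, ((c:ℕ):ℤ)) := by
          rw [Prod.ext_iff]; exact ⟨by ring, rfl⟩
        rw [e]
        exact hcc.1
      · intro hq1
        rw [slice_mem]
        have e : (q.1 - 1 - (q.2 - 1), q.2 - 1, ((c:ℕ):ℤ)) = (q.1 - q.2, q.2 - 1, ((c:ℕ):ℤ)) := by
          rw [Prod.ext_iff]; exact ⟨by ring, rfl⟩
        rw [e]
        exact hcc.2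
  · -- hj
    intro f hf
    rw [Finset.mem_pi] at hf
    rw [mem_ideals3_iff]
    constructor
    · intro p hp
      rw [union_mem] at hp
      obtain ⟨c, hc, hpc, hq⟩ := hp
      have hcn : c < n - 1 := Finset.mem_range.mp hc
      have hreg := mem_reg.mp ((mem_rIdl.mp (hf c hc)).1 hq)
      simp only at hreg
      rw [mem_V3]
      push_cast at hreg
      omega
    · intro p hp hp1
      rw [union_mem] at hp
      obtain ⟨c, hc, hpc, hq⟩ := hp
      have hTc := mem_rIdl.mp (hf c hc)
      have hreg := mem_reg.mp (hTc.1 hq)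
      simp only at hreg
      have hcc := hTc.2 _ hq (by simpa using hp1)
      simp only at hcc
      constructor
      · rw [union_mem]
        refine ⟨c, hc, hpc, ?_⟩
        have e : (p.1 + 1 + (p.2.1 - 1), p.2.1 - 1) = (p.1 + p.2.1, p.2.1 - 1) := by
          rw [Prod.ext_iff]; exact ⟨by ring, rfl⟩
        simp only
        rw [e]
        exact hcc.1
      · rw [union_mem]
        refine ⟨c, hc, hpc, ?_⟩
        have e : (p.1 + (p.2.1 - 1), p.2.1 - 1) = (p.1 + p.2.1 - 1, p.2.1 - 1) := by
          rw [Prod.ext_iff]; exact ⟨by ring, rfl⟩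
        simp only
        rw [e]
        exact hcc.2 (by omega)
  · -- left inverse
    intro I hI
    beta_reduce
    ext p
    rw [union_mem (n := n) (fun c _ =>
      (I.filter (fun p => p.2.2 = ((c:ℕ):ℤ))).image (fun p => (p.1 + p.2.1, p.2.1))) p]
    constructor
    · rintro ⟨c, hc, hpc, hq⟩
      rw [slice_mem] at hq
      have e : (p.1 + p.2.1 - p.2.1, p.2.1, ((c:ℕ):ℤ)) = p := by
        rw [Prod.ext_iff, Prod.ext_iff]
        exact ⟨by ring, rfl, hpc.symm⟩
      rwa [e] at hq
    · intro hp
      have hv := mem_V3.mp ((mem_ideals3_iff.mp hI).1 hp)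
      refine ⟨p.2.2.toNat, Finset.mem_range.mpr (by omega), by omega, ?_⟩
      rw [slice_mem]
      have e : (p.1 + p.2.1 - p.2.1, p.2.1, ((p.2.2.toNat : ℕ):ℤ)) = p := by
        rw [Prod.ext_iff, Prod.ext_iff]
        exact ⟨by ring, rfl, Int.toNat_of_nonneg hv.2.2.1⟩
      rwa [e]
  · -- right inverse
    intro f hf
    beta_reduce
    funext c hc
    beta_reduce
    ext q
    rw [slice_mem, union_mem]
    constructor
    · rintro ⟨c', hc', heq, hq⟩
      simp only at heq
      have hcc : c' = c := by exact_mod_cast heq.symm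
      subst hcc
      have e : (q.1 - q.2 + q.2, q.2) = q := by
        rw [Prod.ext_iff]; exact ⟨by ring, rfl⟩
      rwa [e] at hq
    · intro hq
      refine ⟨c, hc, rfl, ?_⟩
      have e : (q.1 - q.2 + q.2, q.2) = q := by
        rw [Prod.ext_iff]; exact ⟨by ring, rfl⟩
      simp only
      rwa [e]
  · -- weight
    intro I hI
    beta_reduce
    rw [Finset.prod_pow_eq_pow_sum]
    congr 1
    rw [Finset.sum_attach (Finset.range (n-1))
      (fun c => ((I.filter (fun p => p.2.2 = ((c:ℕ):ℤ))).image
        (fun p => (p.1 + p.2.1, p.2.1))).card)]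
    have hmaps : ∀ p ∈ I, p.2.2.toNat ∈ Finset.range (n-1) := by
      intro p hp
      have hv := mem_V3.mp ((mem_ideals3_iff.mp hI).1 hp)
      exact Finset.mem_range.mpr (by omega)
    rw [Finset.card_eq_sum_card_fiberwise hmaps]
    apply Finset.sum_congr rfl
    intro c hc
    have hfc : I.filter (fun p => p.2.2.toNat = c) = I.filter (fun p => p.2.2 = ((c:ℕ):ℤ)) := by
      apply Finset.filter_congr
      intro p hp
      have hv := mem_V3.mp ((mem_ideals3_iff.mp hI).1 hp)
      constructor
      · intro h; omega
      · intro h; omega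
    rw [hfc]
    symm
    apply Finset.card_image_of_injOn
    intro p hp p' hp' hpp
    simp only [Finset.mem_coe, Finset.mem_filter] at hp hp'
    rw [Prod.ext_iff] at hpp
    simp only at hpp
    rw [Prod.ext_iff, Prod.ext_iff]
    refine ⟨by omega, hpp.2, hp.2.trans hp'.2.symm⟩
end

/-- The rank generating function of `J(T_n({b,g}))` is the product of the first `n`
Carlitz–Riordan q-Catalan polynomials. -/
theorem stmt7 (n : ℕ) (hn : 1 ≤ n) :
    genF3 {vb, vg} (V3 n) = ∏ j ∈ Finset.Icc 1 n, qCat j := by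
  rw [genF3_eq_prod]
  have h1 : ∀ c ∈ Finset.range (n-1), rPoly 1 (n-1-c) = qCat ((n-1) - 1 - c + 1 + 1) := by
    intro c hc
    have hcn : c < n - 1 := Finset.mem_range.mp hc
    have he : n - 1 - c = ((n-1) - 1 - c) + 1 := by omega
    rw [he, rPoly_eq, ← Acat_zero_succ, Acat_eq_qCat]
  rw [Finset.prod_congr rfl h1,
    Finset.prod_range_reflect (fun j => qCat (j+1+1)) (n-1)]
  have h2 : Finset.Icc 1 n = insert 1 (Finset.Icc 2 n) := by
    ext j
    simp only [Finset.mem_Icc, Finset.mem_insert]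
    omega
  rw [h2, Finset.prod_insert (by simp [Finset.mem_Icc]), qCat_one, one_mul]
  apply Finset.prod_nbij' (i := fun c => c + 2) (j := fun x => x - 2)
  · intro c hc
    rw [Finset.mem_Icc]
    have := Finset.mem_range.mp hc
    omega
  · intro x hx
    rw [Finset.mem_range]
    have := Finset.mem_Icc.mp hx
    omega
  · intro c hc
    omega
  · intro x hx
    have := Finset.mem_Icc.mp hx
    omega
  · intro c hc
    rfl
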